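/- arXiv:2605.09462 — 2 statements merged into one kernel-verified Lean document; each statement's English description precedes it below -/
import Mathlib

section
/- Let A ∈ {0,1} and Y, Z, W, M, D, X be random variables, and suppose h2, h1, h0, q0, q1, q2 are integrable measurable functions of (W,M,D,X), (W,D,X), (W,X), (Z,X), (Z,D,X), (Z,M,D,X) respectively, satisfying the six conditional moment equations (a)–(f) of the proximal bridge system. Define ψ = E[h0(W,X)] and EIF = A·q0·(h1 − h0) + (1−A)·q1·(h2 − h1) + A·q2·(Y − h2) + h0 − ψ. Then E[EIF] = 0. -/
/-!
Each of the three weighted residuals `A q0 (h1 - h0)`, `(1 - A) q1 (h2 - h1)`, `A q2 (Y - h2)` has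
mean zero: restricted to its treatment arm it is a `q`-weight, measurable for the σ-algebra
conditioned on in the matching equation (c), (b), (a), times a residual whose conditional
expectation vanishes, so the weight pulls out of the conditional expectation. What remains of
`E[EIF]` is `E[h0(W,X)] - ψ = 0`.
-/

open MeasureTheory ProbabilityTheory
open scoped MeasureTheory ProbabilityTheory

section

variable {Ω : Type*} {m mΩ : MeasurableSpace Ω} {μ : Measure Ω}
  {f g : Ω → ℝ}

theorem integral_mul_eq_zero_of_condExp_eq_zero [IsFiniteMeasure μ] (hm : m ≤ mΩ)
    (hf : StronglyMeasurable[m] f) (hg : Integrable g μ) (hfg : Integrable (f * g) μ)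
    (hcond : μ[g|m] =ᵐ[μ] 0) :
    ∫ ω, f ω * g ω ∂μ = 0 :=
  calc ∫ ω, f ω * g ω ∂μ = ∫ ω, μ[f * g|m] ω ∂μ := (integral_condExp hm).symm
    _ = ∫ ω, (f * 0 : Ω → ℝ) ω ∂μ :=
      integral_congr_ae <| (condExp_mul_of_stronglyMeasurable_left hf hfg hg).trans
        (Filter.EventuallyEq.rfl.mul hcond)
    _ = 0 := by simp

theorem setIntegral_mul_eq_zero_of_condExp_cond_eq_zero [IsFiniteMeasure μ] {s : Set Ω}
    (hm : m ≤ mΩ) (hf : StronglyMeasurable[m] f) (hg : IntegrableOn g s μ)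
    (hfg : IntegrableOn (f * g) s μ) (hcond : μ[|s][g|m] =ᵐ[μ[|s]] 0) :
    ∫ ω in s, f ω * g ω ∂μ = 0 := by
  rcases eq_or_ne (μ s) 0 with hμs | hμs
  · simp [Measure.restrict_eq_zero.mpr hμs]
  have hinv : (μ s)⁻¹ ≠ ⊤ := ENNReal.inv_ne_top.mpr hμs
  have hcond_integral := integral_mul_eq_zero_of_condExp_eq_zero (μ := μ[|s]) hm hf
    (hg.smul_measure hinv) (hfg.smul_measure hinv) hcond
  rw [ProbabilityTheory.cond, integral_smul_measure, smul_eq_zero] at hcond_integral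
  exact hcond_integral.resolve_left (ENNReal.toReal_ne_zero.mpr
    ⟨ENNReal.inv_ne_zero.mpr (measure_ne_top μ s), hinv⟩)

theorem integral_mul_eq_setIntegral_of_eq_zero_or_one {A : Ω → ℝ} (hA : Measurable A)
    (hA01 : ∀ ω, A ω = 0 ∨ A ω = 1) (F : Ω → ℝ) :
    ∫ ω, A ω * F ω ∂μ = ∫ ω in {ω | A ω = 1}, F ω ∂μ := by
  have hs : MeasurableSet {ω | A ω = 1} := hA (measurableSet_singleton 1)
  rw [← integral_indicator hs]
  congr with ω
  rcases hA01 ω with h | h <;> simp [Set.indicator, h]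

theorem integral_mul_mul_eq_zero_of_condExp_cond_eq_zero [IsFiniteMeasure μ] {A : Ω → ℝ}
    (hA : Measurable A) (hA01 : ∀ ω, A ω = 0 ∨ A ω = 1) (hm : m ≤ mΩ)
    (hf : StronglyMeasurable[m] f) (hg : Integrable g μ)
    (hAfg : Integrable (fun ω => A ω * f ω * g ω) μ)
    (hcond : μ[|{ω | A ω = 1}][g|m] =ᵐ[μ[|{ω | A ω = 1}]] 0) :
    ∫ ω, A ω * f ω * g ω ∂μ = 0 := by
  have hs : MeasurableSet {ω | A ω = 1} := hA (measurableSet_singleton 1)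
  have hfg : IntegrableOn (f * g) {ω | A ω = 1} μ := by
    refine hAfg.integrableOn.congr_fun (fun ω (hω : A ω = 1) => ?_) hs
    simp [hω]
  simp_rw [mul_assoc]
  rw [integral_mul_eq_setIntegral_of_eq_zero_or_one hA hA01]
  exact setIntegral_mul_eq_zero_of_condExp_cond_eq_zero hm hf hg.integrableOn hfg hcond

end

theorem stmt6_general
    {Ω : Type*} [mΩ : MeasurableSpace Ω] (μ : Measure Ω) [IsProbabilityMeasure μ]
    (A Y Z W M D X : Ω → ℝ)
    (hA : Measurable A) (hZ : Measurable Z)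
    (hM : Measurable M) (hD : Measurable D) (hX : Measurable X)
    (hA01 : ∀ ω, A ω = 0 ∨ A ω = 1)
    (h2 : ℝ × ℝ × ℝ × ℝ → ℝ)
    (hh2int : Integrable (fun ω => h2 (W ω, M ω, D ω, X ω)) μ)
    (h1 : ℝ × ℝ × ℝ → ℝ)
    (hh1int : Integrable (fun ω => h1 (W ω, D ω, X ω)) μ)
    (h0 : ℝ × ℝ → ℝ)
    (hh0int : Integrable (fun ω => h0 (W ω, X ω)) μ)
    (q0 : ℝ × ℝ → ℝ) (hq0 : Measurable q0)
    (q1 : ℝ × ℝ × ℝ → ℝ) (hq1 : Measurable q1)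
    (q2 : ℝ × ℝ × ℝ × ℝ → ℝ) (hq2 : Measurable q2)
    (hYint : Integrable Y μ)
    -- σ-algebras generated by the indicated variables
    (mMDZX mDZX mZX : MeasurableSpace Ω)
    (hmMDZX : mMDZX = MeasurableSpace.comap (fun ω => (M ω, D ω, Z ω, X ω)) inferInstance)
    (hmDZX : mDZX = MeasurableSpace.comap (fun ω => (D ω, Z ω, X ω)) inferInstance)
    (hmZX : mZX = MeasurableSpace.comap (fun ω => (Z ω, X ω)) inferInstance)
    -- (a) E[Y − h2 | A=1, M, D, Z, X] = 0
    (ha : ((μ[|{ω | A ω = 1}])[(fun ω => Y ω - h2 (W ω, M ω, D ω, X ω)) | mMDZX])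
        =ᵐ[μ[|{ω | A ω = 1}]] 0)
    -- (b) E[h2 − h1 | A=0, D, Z, X] = 0
    (hb : ((μ[|{ω | A ω = 0}])[(fun ω => h2 (W ω, M ω, D ω, X ω) - h1 (W ω, D ω, X ω)) | mDZX])
        =ᵐ[μ[|{ω | A ω = 0}]] 0)
    -- (c) E[h1 − h0 | A=1, Z, X] = 0
    (hc : ((μ[|{ω | A ω = 1}])[(fun ω => h1 (W ω, D ω, X ω) - h0 (W ω, X ω)) | mZX])
        =ᵐ[μ[|{ω | A ω = 1}]] 0)
    -- integrability of the relevant products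
    (hi1 : Integrable (fun ω => A ω * q0 (Z ω, X ω) * h1 (W ω, D ω, X ω)) μ)
    (hi2 : Integrable (fun ω => A ω * q0 (Z ω, X ω) * h0 (W ω, X ω)) μ)
    (hi3 : Integrable (fun ω => (1 - A ω) * q1 (Z ω, D ω, X ω) * h2 (W ω, M ω, D ω, X ω)) μ)
    (hi4 : Integrable (fun ω => (1 - A ω) * q1 (Z ω, D ω, X ω) * h1 (W ω, D ω, X ω)) μ)
    (hi6 : Integrable (fun ω => A ω * Y ω * q2 (Z ω, M ω, D ω, X ω)) μ)
    (hi7 : Integrable (fun ω => A ω * q2 (Z ω, M ω, D ω, X ω) * h2 (W ω, M ω, D ω, X ω)) μ)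
    (ψ : ℝ) (hψ : ψ = ∫ ω, h0 (W ω, X ω) ∂μ)
    (EIF : Ω → ℝ)
    (hEIF : ∀ ω, EIF ω =
      A ω * q0 (Z ω, X ω) * (h1 (W ω, D ω, X ω) - h0 (W ω, X ω))
        + (1 - A ω) * q1 (Z ω, D ω, X ω) * (h2 (W ω, M ω, D ω, X ω) - h1 (W ω, D ω, X ω))
        + A ω * q2 (Z ω, M ω, D ω, X ω) * (Y ω - h2 (W ω, M ω, D ω, X ω))
        + h0 (W ω, X ω) - ψ) :
    ∫ ω, EIF ω ∂μ = 0 := by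
  subst hmMDZX hmDZX hmZX
  have hI1 : Integrable (fun ω => A ω * q0 (Z ω, X ω)
      * (h1 (W ω, D ω, X ω) - h0 (W ω, X ω))) μ :=
    (hi1.sub hi2).congr (ae_of_all _ fun ω => by simp only [Pi.sub_apply]; ring)
  have hI2 : Integrable (fun ω => (1 - A ω) * q1 (Z ω, D ω, X ω)
      * (h2 (W ω, M ω, D ω, X ω) - h1 (W ω, D ω, X ω))) μ :=
    (hi3.sub hi4).congr (ae_of_all _ fun ω => by simp only [Pi.sub_apply]; ring)
  have hI3 : Integrable (fun ω => A ω * q2 (Z ω, M ω, D ω, X ω)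
      * (Y ω - h2 (W ω, M ω, D ω, X ω))) μ :=
    (hi6.sub hi7).congr (ae_of_all _ fun ω => by simp only [Pi.sub_apply]; ring)
  have hE1 : ∫ ω, A ω * q0 (Z ω, X ω) * (h1 (W ω, D ω, X ω) - h0 (W ω, X ω)) ∂μ = 0 :=
    integral_mul_mul_eq_zero_of_condExp_cond_eq_zero hA hA01 (hZ.prodMk hX).comap_le
      (hq0.comp (comap_measurable _)).stronglyMeasurable (hh1int.sub hh0int) hI1 hc
  have hnotA01 (ω : Ω) : 1 - A ω = 0 ∨ 1 - A ω = 1 := by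
    rcases hA01 ω with h | h <;> simp [h]
  have hnotA_eq_one : {ω | 1 - A ω = 1} = {ω | A ω = 0} := by
    ext ω; simp [sub_eq_self]
  have hE2 : ∫ ω, (1 - A ω) * q1 (Z ω, D ω, X ω)
      * (h2 (W ω, M ω, D ω, X ω) - h1 (W ω, D ω, X ω)) ∂μ = 0 :=
    integral_mul_mul_eq_zero_of_condExp_cond_eq_zero (measurable_const.sub hA) hnotA01
      (hD.prodMk (hZ.prodMk hX)).comap_le
      ((hq1.comp (by fun_prop : Measurable fun p : ℝ × ℝ × ℝ => (p.2.1, p.1, p.2.2))).comp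
        (comap_measurable _)).stronglyMeasurable
      (hh2int.sub hh1int) hI2 (hnotA_eq_one ▸ hb)
  have hE3 : ∫ ω, A ω * q2 (Z ω, M ω, D ω, X ω)
      * (Y ω - h2 (W ω, M ω, D ω, X ω)) ∂μ = 0 :=
    integral_mul_mul_eq_zero_of_condExp_cond_eq_zero hA hA01
      (hM.prodMk (hD.prodMk (hZ.prodMk hX))).comap_le
      ((hq2.comp (by fun_prop : Measurable fun p : ℝ × ℝ × ℝ × ℝ =>
        (p.2.2.1, p.1, p.2.1, p.2.2.2))).comp (comap_measurable _)).stronglyMeasurable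
      (hYint.sub hh2int) hI3 ha
  simp_rw [hEIF]
  refine (integral_sub (((hI1.add hI2).add hI3).add hh0int) (integrable_const ψ)).trans ?_
  rw [integral_add' ((hI1.add hI2).add hI3) hh0int, integral_add' (hI1.add hI2) hI3,
    integral_add' hI1 hI2, hE1, hE2, hE3]
  simp [hψ]

/-- when all six bridge equations (a)–(f) hold, the efficient
influence function `EIF = A q0 (h1 − h0) + (1−A) q1 (h2 − h1) + A q2 (Y − h2) + h0 − ψ`
with `ψ = E[h0(W,X)]` has mean zero: `E[EIF] = 0`. -/
theorem stmt6
    {Ω : Type*} [mΩ : MeasurableSpace Ω] (μ : Measure Ω) [IsProbabilityMeasure μ]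
    (A Y Z W M D X : Ω → ℝ)
    (hA : Measurable A) (hY : Measurable Y) (hZ : Measurable Z) (hW : Measurable W)
    (hM : Measurable M) (hD : Measurable D) (hX : Measurable X)
    (hA01 : ∀ ω, A ω = 0 ∨ A ω = 1)
    (h2 : ℝ × ℝ × ℝ × ℝ → ℝ) (hh2 : Measurable h2)
    (hh2int : Integrable (fun ω => h2 (W ω, M ω, D ω, X ω)) μ)
    (h1 : ℝ × ℝ × ℝ → ℝ) (hh1 : Measurable h1)
    (hh1int : Integrable (fun ω => h1 (W ω, D ω, X ω)) μ)
    (h0 : ℝ × ℝ → ℝ) (hh0 : Measurable h0)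
    (hh0int : Integrable (fun ω => h0 (W ω, X ω)) μ)
    (q0 : ℝ × ℝ → ℝ) (hq0 : Measurable q0)
    (hq0int : Integrable (fun ω => q0 (Z ω, X ω)) μ)
    (q1 : ℝ × ℝ × ℝ → ℝ) (hq1 : Measurable q1)
    (hq1int : Integrable (fun ω => q1 (Z ω, D ω, X ω)) μ)
    (q2 : ℝ × ℝ × ℝ × ℝ → ℝ) (hq2 : Measurable q2)
    (hq2int : Integrable (fun ω => q2 (Z ω, M ω, D ω, X ω)) μ)
    (hYint : Integrable Y μ)
    -- σ-algebras generated by the indicated variables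
    (mMDZX mDZX mZX mWX mWDX mWMDX : MeasurableSpace Ω)
    (hmMDZX : mMDZX = MeasurableSpace.comap (fun ω => (M ω, D ω, Z ω, X ω)) inferInstance)
    (hmDZX : mDZX = MeasurableSpace.comap (fun ω => (D ω, Z ω, X ω)) inferInstance)
    (hmZX : mZX = MeasurableSpace.comap (fun ω => (Z ω, X ω)) inferInstance)
    (hmWX : mWX = MeasurableSpace.comap (fun ω => (W ω, X ω)) inferInstance)
    (hmWDX : mWDX = MeasurableSpace.comap (fun ω => (W ω, D ω, X ω)) inferInstance)
    (hmWMDX : mWMDX = MeasurableSpace.comap (fun ω => (W ω, M ω, D ω, X ω)) inferInstance)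
    -- (a) E[Y − h2 | A=1, M, D, Z, X] = 0
    (ha : ((μ[|{ω | A ω = 1}])[(fun ω => Y ω - h2 (W ω, M ω, D ω, X ω)) | mMDZX])
        =ᵐ[μ[|{ω | A ω = 1}]] 0)
    -- (b) E[h2 − h1 | A=0, D, Z, X] = 0
    (hb : ((μ[|{ω | A ω = 0}])[(fun ω => h2 (W ω, M ω, D ω, X ω) - h1 (W ω, D ω, X ω)) | mDZX])
        =ᵐ[μ[|{ω | A ω = 0}]] 0)
    -- (c) E[h1 − h0 | A=1, Z, X] = 0
    (hc : ((μ[|{ω | A ω = 1}])[(fun ω => h1 (W ω, D ω, X ω) - h0 (W ω, X ω)) | mZX])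
        =ᵐ[μ[|{ω | A ω = 1}]] 0)
    -- (d) E[A q0 − 1 | W, X] = 0
    (hd : (μ[(fun ω => A ω * q0 (Z ω, X ω) - 1) | mWX]) =ᵐ[μ] 0)
    -- (e) E[(1−A) q1 − A q0 | W, D, X] = 0
    (he : (μ[(fun ω => (1 - A ω) * q1 (Z ω, D ω, X ω) - A ω * q0 (Z ω, X ω)) | mWDX])
        =ᵐ[μ] 0)
    -- (f) E[A q2 − (1−A) q1 | W, M, D, X] = 0
    (hf : (μ[(fun ω => A ω * q2 (Z ω, M ω, D ω, X ω) - (1 - A ω) * q1 (Z ω, D ω, X ω)) | mWMDX])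
        =ᵐ[μ] 0)
    -- integrability of the relevant products
    (hi1 : Integrable (fun ω => A ω * q0 (Z ω, X ω) * h1 (W ω, D ω, X ω)) μ)
    (hi2 : Integrable (fun ω => A ω * q0 (Z ω, X ω) * h0 (W ω, X ω)) μ)
    (hi3 : Integrable (fun ω => (1 - A ω) * q1 (Z ω, D ω, X ω) * h2 (W ω, M ω, D ω, X ω)) μ)
    (hi4 : Integrable (fun ω => (1 - A ω) * q1 (Z ω, D ω, X ω) * h1 (W ω, D ω, X ω)) μ)
    (hi5 : Integrable (fun ω => A ω * q2 (Z ω, M ω, D ω, X ω) * h2 (W ω, M ω, D ω, X ω)) μ)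
    (hi6 : Integrable (fun ω => A ω * Y ω * q2 (Z ω, M ω, D ω, X ω)) μ)
    (hi7 : Integrable (fun ω => A ω * q2 (Z ω, M ω, D ω, X ω) * h2 (W ω, M ω, D ω, X ω)) μ)
    (ψ : ℝ) (hψ : ψ = ∫ ω, h0 (W ω, X ω) ∂μ)
    (EIF : Ω → ℝ)
    (hEIF : ∀ ω, EIF ω =
      A ω * q0 (Z ω, X ω) * (h1 (W ω, D ω, X ω) - h0 (W ω, X ω))
        + (1 - A ω) * q1 (Z ω, D ω, X ω) * (h2 (W ω, M ω, D ω, X ω) - h1 (W ω, D ω, X ω))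
        + A ω * q2 (Z ω, M ω, D ω, X ω) * (Y ω - h2 (W ω, M ω, D ω, X ω))
        + h0 (W ω, X ω) - ψ) :
    ∫ ω, EIF ω ∂μ = 0 :=
  stmt6_general (mΩ := mΩ) μ A Y Z W M D X hA hZ hM hD hX hA01 h2 hh2int h1 hh1int h0 hh0int q0 hq0
    q1 hq1 q2 hq2 hYint mMDZX mDZX mZX hmMDZX hmDZX hmZX ha hb hc hi1 hi2 hi3 hi4 hi6 hi7 ψ hψ EIF
    hEIF
end

section
/- Let U, Z, A, M, D, X, W, Y be random variables on a finite probability space with A ∈ {0,1}. Assume: (i) conditional independence Z ⫫ (W, Y, M, D) | (A, U, X); (ii) completeness: for every function g(u) and every fixed (m,d,x) with positive probability, E[g(U) | Z, A=1, M=m, D=d, X=x] = 0 a.s. implies g(U)·1{A=1, M=m, D=d, X=x has positive conditional probability given U} corresponds to g(U)=0 a.s. on the relevant support. Let h2 be a function of (W,M,D,X) satisfying E[Y − h2(W,M,D,X) | A=1, M, D, Z, X] = 0 almost surely. Then E[Y − h2(W,M,D,X) | A=1, M, D, U, X] = 0 almost surely. -/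
/-!
On a finite space every conditional expectation given a finitely valued variable is a fibrewise
average, so the observed and the latent bridge equations say that `f = Y - h2 (W, M, D, X)` has
integral zero over every cell `{A = 1, M = m, D = d, Z = z, X = x}`, resp.
`{A = 1, M = m, D = d, U = u, X = x}`. Fix `(m, d, x)` and let `g u` be the average of `f` over
the `U = u` cell. On `{A = 1, U = u, X = x}` the residual `f` is a function of `(W, Y, M, D)`,
which is independent of `Z` there, so cutting the `U = u` cell along the values of `Z` does not
change the average of `f`. Summing over `u`, the observed equation becomes `E[g(U) | Z] = 0` on
`{A = 1, M = m, D = d, X = x}`; completeness then forces `g(U) = 0` there, which is the latent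
equation.
-/

open MeasureTheory ProbabilityTheory Set

section Cond

variable {Ω : Type*} [MeasurableSpace Ω] {μ : Measure Ω} {B : Set Ω}

theorem integral_cond (f : Ω → ℝ) : ∫ ω, f ω ∂μ[|B] = (μ.real B)⁻¹ * ∫ ω in B, f ω ∂μ := by
  rw [ProbabilityTheory.cond, integral_smul_measure, ENNReal.toReal_inv, smul_eq_mul,
    measureReal_def]

theorem setIntegral_cond (hB : MeasurableSet B) (f : Ω → ℝ) (s : Set Ω) :
    ∫ ω in s, f ω ∂μ[|B] = (μ.real B)⁻¹ * ∫ ω in B ∩ s, f ω ∂μ := by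
  rw [ProbabilityTheory.cond, Measure.restrict_smul, integral_smul_measure,
    Measure.restrict_restrict' hB, inter_comm, ENNReal.toReal_inv, smul_eq_mul, measureReal_def]

theorem setIntegral_eq_measureReal_mul_integral_cond [IsFiniteMeasure μ] (f : Ω → ℝ) :
    ∫ ω in B, f ω ∂μ = μ.real B * ∫ ω, f ω ∂μ[|B] := by
  rw [integral_cond]
  rcases eq_or_ne (μ.real B) 0 with h | h
  · rw [h, zero_mul, setIntegral_measure_zero _ ((measureReal_eq_zero_iff).mp h)]
  · rw [mul_inv_cancel_left₀ h]

theorem setIntegral_indicator_comp_cond {β : Type*} [MeasurableSpace β] (hB : MeasurableSet B)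
    {V : Ω → β} (hV : Measurable V) {T : Set β} (hT : MeasurableSet T) {φ : β → ℝ}
    {f : Ω → ℝ} (hfB : ∀ ω ∈ B, f ω = φ (V ω)) {s : Set Ω} (hs : MeasurableSet s) :
    ∫ ω in s, T.indicator φ (V ω) ∂μ[|B] = (μ.real B)⁻¹ * ∫ ω in B ∩ V ⁻¹' T ∩ s, f ω ∂μ := by
  rw [setIntegral_cond hB]
  congr 1
  simp_rw [← indicator_comp_right]
  rw [setIntegral_indicator (hV hT), inter_right_comm]
  exact setIntegral_congr_fun ((hB.inter (hV hT)).inter hs) fun ω hω => (hfB ω hω.1.1).symm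

end Cond

section FiniteSpace

variable {Ω α β : Type*} [Fintype Ω] [MeasurableSpace Ω]
  [MeasurableSpace α] [MeasurableSingletonClass α] [MeasurableSpace β] [MeasurableSingletonClass β]

theorem measurable_comp_of_fintype {γ : Type*} [MeasurableSpace γ] {V : Ω → β}
    (hV : Measurable V) (ψ : β → γ) :
    Measurable fun ω => ψ (V ω) := by
  intro S _
  have := hV ((finite_range V).inter_of_right (ψ ⁻¹' S)).measurableSet
  rwa [preimage_inter_range] at this

theorem integrable_of_fintype {E : Type*} [NormedAddCommGroup E] {ν : Measure Ω}
    [IsFiniteMeasure ν] {f : Ω → E} (hf : AEStronglyMeasurable f ν) : Integrable f ν :=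
  .of_bound hf (∑ ω, ‖f ω‖) <| ae_of_all _ fun ω =>
    Finset.single_le_sum (fun _ _ => norm_nonneg _) (Finset.mem_univ ω)

theorem setIntegral_eq_sum_setIntegral_preimage_singleton [DecidableEq α] {ν : Measure Ω}
    [IsFiniteMeasure ν] {φ : Ω → α} (hφ : Measurable φ) {f : Ω → ℝ} (hf : Measurable f) {s : Set Ω}
    (hs : MeasurableSet s) :
    ∫ ω in s, f ω ∂ν = ∑ t ∈ Finset.univ.image φ, ∫ ω in s ∩ φ ⁻¹' {t}, f ω ∂ν := by
  have hcover : s = ⋃ t ∈ Finset.univ.image φ, s ∩ φ ⁻¹' {t} := by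
    ext ω; simp
  conv_lhs => rw [hcover]
  refine integral_biUnion_finset _ (fun t _ => hs.inter (hφ (measurableSet_singleton t)))
    ?_ fun t _ => (integrable_of_fintype hf.aestronglyMeasurable).integrableOn
  exact fun t _ t' _ htt' =>
    ((pairwise_disjoint_fiber φ htt').mono inter_subset_right inter_subset_right)

theorem setIntegral_comp_eq_sum [DecidableEq β] {ν : Measure Ω} [IsFiniteMeasure ν]
    {V : Ω → β} (hV : Measurable V) (ψ : β → ℝ) {s : Set Ω} (hs : MeasurableSet s) :
    ∫ ω in s, ψ (V ω) ∂ν = ∑ v ∈ Finset.univ.image V, ν.real (s ∩ V ⁻¹' {v}) * ψ v := by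
  rw [setIntegral_eq_sum_setIntegral_preimage_singleton hV (measurable_comp_of_fintype hV ψ) hs]
  refine Finset.sum_congr rfl fun v _ => ?_
  rw [setIntegral_congr_fun (hs.inter (hV (measurableSet_singleton v)))
    (g := fun _ => ψ v) fun ω hω => by rw [hω.2], setIntegral_const, smul_eq_mul]

theorem condExp_comap_ae_eq_zero_iff {ν : Measure Ω} [IsFiniteMeasure ν] {φ : Ω → α}
    (hφ : Measurable φ) {f : Ω → ℝ} (hf : Measurable f) :
    ν[f | MeasurableSpace.comap φ inferInstance] =ᵐ[ν] 0 ↔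
      ∀ t, ∫ ω in φ ⁻¹' {t}, f ω ∂ν = 0 := by
  have hm := hφ.comap_le
  have hfi := integrable_of_fintype (ν := ν) hf.aestronglyMeasurable
  constructor
  · intro h t
    rw [← setIntegral_condExp hm hfi ⟨{t}, measurableSet_singleton t, rfl⟩,
      setIntegral_congr_ae (hφ (measurableSet_singleton t)) (h.mono fun ω hω _ => hω)]
    simp
  · intro h
    refine (ae_eq_condExp_of_forall_setIntegral_eq hm hfi
      (fun _ _ _ => integrableOn_zero) (fun _ ⟨S, hS, hSφ⟩ _ => ?_)
      stronglyMeasurable_const.aestronglyMeasurable).symm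
    subst hSφ
    classical
    simp only [integral_zero]
    rw [setIntegral_eq_sum_setIntegral_preimage_singleton hφ hf (hφ hS)]
    refine (Finset.sum_eq_zero fun t _ => ?_).symm
    by_cases ht : t ∈ S
    · rw [inter_eq_right.mpr (preimage_mono (singleton_subset_iff.mpr ht)), h]
    · rw [← preimage_inter, inter_singleton_eq_empty.mpr ht, preimage_empty, setIntegral_empty]

theorem cond_condExp_comap_ae_eq_zero_iff {μ : Measure Ω} [IsFiniteMeasure μ] {B : Set Ω}
    (hB : MeasurableSet B) {φ : Ω → α} (hφ : Measurable φ) {f : Ω → ℝ} (hf : Measurable f) :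
    (μ[|B])[f | MeasurableSpace.comap φ inferInstance] =ᵐ[μ[|B]] 0 ↔
      ∀ t, ∫ ω in B ∩ φ ⁻¹' {t}, f ω ∂μ = 0 := by
  rw [condExp_comap_ae_eq_zero_iff hφ hf]
  refine forall_congr' fun t => ?_
  rw [setIntegral_cond hB]
  rcases eq_or_ne (μ.real B) 0 with h | h
  · simp [setIntegral_measure_zero _
      (measure_mono_null inter_subset_left ((measureReal_eq_zero_iff).mp h))]
  · simp [h]

theorem setIntegral_preimage_singleton_comp_of_indep {ν : Measure Ω} [IsFiniteMeasure ν]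
    {Z : Ω → α} {V : Ω → β} (hZ : Measurable Z) (hV : Measurable V)
    (hindep : ∀ z v, ν (Z ⁻¹' {z} ∩ V ⁻¹' {v}) = ν (Z ⁻¹' {z}) * ν (V ⁻¹' {v}))
    (ψ : β → ℝ) (z : α) :
    ∫ ω in Z ⁻¹' {z}, ψ (V ω) ∂ν = ν.real (Z ⁻¹' {z}) * ∫ ω, ψ (V ω) ∂ν := by
  classical
  rw [setIntegral_comp_eq_sum hV ψ (hZ (measurableSet_singleton z)), ← setIntegral_univ,
    setIntegral_comp_eq_sum hV ψ .univ, Finset.mul_sum]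
  refine Finset.sum_congr rfl fun v _ => ?_
  simp only [univ_inter, measureReal_def, hindep, ENNReal.toReal_mul, mul_assoc]

theorem setIntegral_inter_preimage_singleton_eq_integral_cond_mul {μ : Measure Ω}
    [IsFiniteMeasure μ] {C : Set Ω} (hC : MeasurableSet C) {Z : Ω → α} {V : Ω → β}
    (hZ : Measurable Z) (hV : Measurable V)
    (hindep : ∀ z v, μ[Z ⁻¹' {z} ∩ V ⁻¹' {v} | C] = μ[Z ⁻¹' {z} | C] * μ[V ⁻¹' {v} | C])
    {T : Set β} (hT : MeasurableSet T) {φ : β → ℝ} {f : Ω → ℝ}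
    (hfC : ∀ ω ∈ C, f ω = φ (V ω)) (z : α) :
    ∫ ω in C ∩ V ⁻¹' T ∩ Z ⁻¹' {z}, f ω ∂μ
      = (∫ ω, f ω ∂μ[|C ∩ V ⁻¹' T]) * μ.real (C ∩ V ⁻¹' T ∩ Z ⁻¹' {z}) := by
  set F := C ∩ V ⁻¹' T
  have hZz : MeasurableSet (Z ⁻¹' {z}) := hZ (measurableSet_singleton z)
  have hcond_univ : ∀ {φ' : β → ℝ} {f' : Ω → ℝ}, (∀ ω ∈ C, f' ω = φ' (V ω)) →
      ∫ ω, T.indicator φ' (V ω) ∂μ[|C] = (μ.real C)⁻¹ * ∫ ω in F, f' ω ∂μ := fun hf' => by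
    rw [← setIntegral_univ, setIntegral_indicator_comp_cond hC hV hT hf' .univ, inter_univ]
  have hsplit := setIntegral_preimage_singleton_comp_of_indep hZ hV hindep
  have hint := hsplit (T.indicator φ) z
  have hmeas := hsplit (T.indicator 1) z
  rw [setIntegral_indicator_comp_cond hC hV hT hfC hZz, hcond_univ hfC] at hint
  rw [setIntegral_indicator_comp_cond hC hV hT (f := 1) (fun _ _ => rfl) hZz,
    hcond_univ (f' := 1) (fun _ _ => rfl)] at hmeas
  simp only [Pi.one_apply, setIntegral_const, smul_eq_mul, mul_one] at hmeas
  rw [integral_cond]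
  rcases eq_or_ne (μ.real F) 0 with h0 | h0
  · have hF0 : μ F = 0 := (measureReal_eq_zero_iff).mp h0
    rw [setIntegral_measure_zero _ (measure_mono_null inter_subset_left hF0),
      setIntegral_measure_zero _ hF0, mul_zero, zero_mul]
  · have hκ : (μ.real C)⁻¹ ≠ 0 := inv_ne_zero fun hC0 =>
      h0 (le_antisymm (hC0 ▸ measureReal_mono inter_subset_left) measureReal_nonneg)
    have h1 := mul_left_cancel₀ hκ (hint.trans (mul_left_comm _ _ _))
    have h2 := mul_left_cancel₀ hκ (hmeas.trans (mul_left_comm _ _ _))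
    rw [h1, h2]
    field_simp

theorem setIntegral_inter_preimage_singleton_eq_zero_of_complete {μ : Measure Ω}
    [IsFiniteMeasure μ] {E : Set Ω} (hE : MeasurableSet E) {U : Ω → β} {Z : Ω → α}
    (hU : Measurable U) (hZ : Measurable Z) {f : Ω → ℝ} (hf : Measurable f)
    (hfac : ∀ u z, ∫ ω in E ∩ U ⁻¹' {u} ∩ Z ⁻¹' {z}, f ω ∂μ
      = (∫ ω, f ω ∂μ[|E ∩ U ⁻¹' {u}]) * μ.real (E ∩ U ⁻¹' {u} ∩ Z ⁻¹' {z}))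
    (hobs : ∀ z, ∫ ω in E ∩ Z ⁻¹' {z}, f ω ∂μ = 0)
    (hcomp : ∀ g : β → ℝ,
      (μ[|E])[fun ω => g (U ω) | MeasurableSpace.comap Z inferInstance] =ᵐ[μ[|E]] 0 →
        ∀ᵐ ω ∂μ[|E], g (U ω) = 0)
    (u : β) :
    ∫ ω in E ∩ U ⁻¹' {u}, f ω ∂μ = 0 := by
  classical
  set g : β → ℝ := fun u => ∫ ω, f ω ∂μ[|E ∩ U ⁻¹' {u}]
  have hg : ∀ᵐ ω ∂μ[|E], g (U ω) = 0 := by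
    refine hcomp g <| (cond_condExp_comap_ae_eq_zero_iff hE hZ
      (measurable_comp_of_fintype hU g)).mpr fun z => ?_
    have hEz := hE.inter (hZ (measurableSet_singleton z))
    rw [setIntegral_comp_eq_sum hU g hEz, ← hobs z,
      setIntegral_eq_sum_setIntegral_preimage_singleton hU hf hEz]
    refine Finset.sum_congr rfl fun u _ => ?_
    rw [inter_right_comm, hfac, mul_comm]
  have hnull : μ (E ∩ {ω | ¬g (U ω) = 0}) = 0 := by
    rw [← cond_mul_eq_inter hE, ae_iff.mp hg, zero_mul]
  rw [setIntegral_eq_measureReal_mul_integral_cond]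
  by_cases hgu : g u = 0
  · exact mul_eq_zero_of_right _ hgu
  · have hEu : μ (E ∩ U ⁻¹' {u}) = 0 :=
      measure_mono_null (fun ω hω => ⟨hω.1, by simpa [show U ω = u from hω.2] using hgu⟩ :
        E ∩ U ⁻¹' {u} ⊆ E ∩ {ω | ¬g (U ω) = 0}) hnull
    rw [measureReal_def, hEu, ENNReal.toReal_zero, zero_mul]

end FiniteSpace

theorem stmt13_general
    {Ω : Type*} [Fintype Ω] [mΩ : MeasurableSpace Ω] (μ : Measure Ω)
    [IsProbabilityMeasure μ]
    (A U Z W Y M D X : Ω → ℝ)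
    (hA : Measurable A) (hU : Measurable U) (hZ : Measurable Z) (hW : Measurable W)
    (hY : Measurable Y) (hM : Measurable M) (hD : Measurable D) (hX : Measurable X)
    -- (i) Z ⫫ (W, Y, M, D) | (A, U, X), stated elementarily on the finite space
    (hCI : ∀ (a u x z : ℝ) (v : ℝ × ℝ × ℝ × ℝ),
      (μ[|{ω | A ω = a ∧ U ω = u ∧ X ω = x}])
          ({ω | Z ω = z} ∩ {ω | (W ω, Y ω, M ω, D ω) = v})
        = (μ[|{ω | A ω = a ∧ U ω = u ∧ X ω = x}]) {ω | Z ω = z}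
            * (μ[|{ω | A ω = a ∧ U ω = u ∧ X ω = x}]) {ω | (W ω, Y ω, M ω, D ω) = v})
    -- (ii) completeness of U given Z on each event {A=1, M=m, D=d, X=x}
    (hcomp : ∀ (g : ℝ → ℝ) (m₀ d₀ x₀ : ℝ),
      0 < μ {ω | A ω = 1 ∧ M ω = m₀ ∧ D ω = d₀ ∧ X ω = x₀} →
      ((μ[|{ω | A ω = 1 ∧ M ω = m₀ ∧ D ω = d₀ ∧ X ω = x₀}])[(fun ω => g (U ω)) | MeasurableSpace.comap Z inferInstance])
        =ᵐ[μ[|{ω | A ω = 1 ∧ M ω = m₀ ∧ D ω = d₀ ∧ X ω = x₀}]] 0 →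
      (∀ᵐ ω ∂(μ[|{ω | A ω = 1 ∧ M ω = m₀ ∧ D ω = d₀ ∧ X ω = x₀}]), g (U ω) = 0))
    (h2 : ℝ × ℝ × ℝ × ℝ → ℝ)
    -- observed bridge equation: E[Y − h2 | A=1, M, D, Z, X] = 0 a.s.
    (hbridge : ((μ[|{ω | A ω = 1}])[(fun ω => Y ω - h2 (W ω, M ω, D ω, X ω)) |
          MeasurableSpace.comap (fun ω => (M ω, D ω, Z ω, X ω)) inferInstance])
        =ᵐ[μ[|{ω | A ω = 1}]] 0) :
    -- latent bridge equation: E[Y − h2 | A=1, M, D, U, X] = 0 a.s.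
    ((μ[|{ω | A ω = 1}])[(fun ω => Y ω - h2 (W ω, M ω, D ω, X ω)) |
          MeasurableSpace.comap (fun ω => (M ω, D ω, U ω, X ω)) inferInstance])
      =ᵐ[μ[|{ω | A ω = 1}]] 0 := by
  set f : Ω → ℝ := fun ω => Y ω - h2 (W ω, M ω, D ω, X ω)
  have hV : Measurable fun ω => (W ω, Y ω, M ω, D ω) := by fun_prop
  have hf : Measurable f := measurable_comp_of_fintype (hV.prodMk hX)
    fun p => p.1.2.1 - h2 (p.1.1, p.1.2.2.1, p.1.2.2.2, p.2)
  have hA1 : MeasurableSet {ω | A ω = 1} := hA (measurableSet_singleton 1)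
  have hobs := (cond_condExp_comap_ae_eq_zero_iff hA1 (by fun_prop) hf).mp hbridge
  refine (cond_condExp_comap_ae_eq_zero_iff hA1 (by fun_prop) hf).mpr ?_
  rintro ⟨m, d, u₀, x⟩
  set E := {ω | A ω = 1 ∧ M ω = m ∧ D ω = d ∧ X ω = x}
  have hE : MeasurableSet E := by measurability
  have hfiber : ∀ {K : Ω → ℝ} (k : ℝ),
      {ω | A ω = 1} ∩ (fun ω => (M ω, D ω, K ω, X ω)) ⁻¹' {(m, d, k, x)} = E ∩ K ⁻¹' {k} := by
    intro K k; ext ω; simp [E]; tauto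
  rw [hfiber]
  rcases eq_zero_or_pos (μ E) with hE0 | hEpos
  · exact setIntegral_measure_zero _ (measure_mono_null inter_subset_left hE0)
  refine setIntegral_inter_preimage_singleton_eq_zero_of_complete hE hU hZ hf (fun u z => ?_)
    (fun z => hfiber z ▸ hobs (m, d, z, x)) (fun g => hcomp g m d x hEpos) u₀
  have hEU : E ∩ U ⁻¹' {u} = {ω | A ω = 1 ∧ U ω = u ∧ X ω = x} ∩
      (fun ω => (W ω, Y ω, M ω, D ω)) ⁻¹' {v | v.2.2 = (m, d)} := by
    ext ω; simp [E]; tauto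
  rw [hEU]
  exact setIntegral_inter_preimage_singleton_eq_integral_cond_mul
    (by measurability) hZ hV (hCI 1 u x) (measurable_snd.snd (measurableSet_singleton (m, d)))
    (φ := fun v => v.2.1 - h2 (v.1, v.2.2.1, v.2.2.2, x))
    (fun ω hω => by simp only [f, show X ω = x from hω.2.2]) z

/-- latent validity of the outcome confounding bridge function on a
finite probability space. Assume (i) the conditional independence
`Z ⫫ (W,Y,M,D) | (A,U,X)` (stated elementarily via conditional measures given the
events `{A=a, U=u, X=x}`), and (ii) completeness of `U` given `Z` on each positive
probability event `{A=1, M=m, D=d, X=x}`. If `h2(W,M,D,X)` satisfies the observed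
bridge equation `E[Y − h2 | A=1, M, D, Z, X] = 0` a.s. (encoded via the conditional
measure given `{A=1}` and the σ-algebra `σ(M,D,Z,X)`), then it satisfies the latent
equation `E[Y − h2 | A=1, M, D, U, X] = 0` a.s. -/
theorem stmt13
    {Ω : Type*} [Fintype Ω] [mΩ : MeasurableSpace Ω] (μ : Measure Ω)
    [IsProbabilityMeasure μ]
    (A U Z W Y M D X : Ω → ℝ)
    (hA : Measurable A) (hU : Measurable U) (hZ : Measurable Z) (hW : Measurable W)
    (hY : Measurable Y) (hM : Measurable M) (hD : Measurable D) (hX : Measurable X)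
    (hA01 : ∀ ω, A ω = 0 ∨ A ω = 1)
    -- (i) Z ⫫ (W, Y, M, D) | (A, U, X), stated elementarily on the finite space
    (hCI : ∀ (a u x z : ℝ) (v : ℝ × ℝ × ℝ × ℝ),
      (μ[|{ω | A ω = a ∧ U ω = u ∧ X ω = x}])
          ({ω | Z ω = z} ∩ {ω | (W ω, Y ω, M ω, D ω) = v})
        = (μ[|{ω | A ω = a ∧ U ω = u ∧ X ω = x}]) {ω | Z ω = z}
            * (μ[|{ω | A ω = a ∧ U ω = u ∧ X ω = x}]) {ω | (W ω, Y ω, M ω, D ω) = v})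
    -- (ii) completeness of U given Z on each event {A=1, M=m, D=d, X=x}
    (hcomp : ∀ (g : ℝ → ℝ) (m₀ d₀ x₀ : ℝ),
      0 < μ {ω | A ω = 1 ∧ M ω = m₀ ∧ D ω = d₀ ∧ X ω = x₀} →
      ((μ[|{ω | A ω = 1 ∧ M ω = m₀ ∧ D ω = d₀ ∧ X ω = x₀}])[(fun ω => g (U ω)) | MeasurableSpace.comap Z inferInstance])
        =ᵐ[μ[|{ω | A ω = 1 ∧ M ω = m₀ ∧ D ω = d₀ ∧ X ω = x₀}]] 0 →
      (∀ᵐ ω ∂(μ[|{ω | A ω = 1 ∧ M ω = m₀ ∧ D ω = d₀ ∧ X ω = x₀}]), g (U ω) = 0))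
    (h2 : ℝ × ℝ × ℝ × ℝ → ℝ) (hh2 : Measurable h2)
    -- observed bridge equation: E[Y − h2 | A=1, M, D, Z, X] = 0 a.s.
    (hbridge : ((μ[|{ω | A ω = 1}])[(fun ω => Y ω - h2 (W ω, M ω, D ω, X ω)) |
          MeasurableSpace.comap (fun ω => (M ω, D ω, Z ω, X ω)) inferInstance])
        =ᵐ[μ[|{ω | A ω = 1}]] 0) :
    -- latent bridge equation: E[Y − h2 | A=1, M, D, U, X] = 0 a.s.
    ((μ[|{ω | A ω = 1}])[(fun ω => Y ω - h2 (W ω, M ω, D ω, X ω)) |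
          MeasurableSpace.comap (fun ω => (M ω, D ω, U ω, X ω)) inferInstance])
      =ᵐ[μ[|{ω | A ω = 1}]] 0 :=
  stmt13_general (mΩ := mΩ) μ A U Z W Y M D X hA hU hZ hW hY hM hD hX hCI hcomp h2 hbridge
end
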